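/- For the classical Hurwitz zeta function: if Re(s) > 1 and 0 ≤ x < 1, then ζ(s, 1-x) = ∑_{j=0}^∞ ((s)_j / j!) ζ(s+j) x^j, where (s)_j = s(s+1)⋯(s+j-1) is the Pochhammer symbol, ζ(s,a) = ∑_{n=0}^∞ (n+a)^{-s}, and ζ(s) is the Riemann zeta function. Equivalently, ∑_{n=1}^∞ (n - x)^{-s} = ∑_{j=0}^∞ C(-s,j)(-x)^j ∑_{n=1}^∞ n^{-s-j}. -/

import Mathlib

/-!
Expand each term binomially, `(n + 1 - x)^(-s) = ∑ⱼ C(-s, j) (-x)ʲ (n + 1)^(-s-j)`. Since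
`|(n + 1)^(-s-j)| ≤ (n + 1)^(-Re s)` and the binomial series converges absolutely for `|x| < 1`,
the double series is absolutely summable, so the two summations may be swapped; the inner sums
are then `ζ(s + j)`, and `C(-s, j) (-1)ʲ = (s)ⱼ / j!`.
-/

open Complex Filter Topology

/-- Generalized binomial coefficient `C(a, j) = a(a-1)⋯(a-j+1)/j!` for complex `a`. -/
noncomputable def cbinom (a : ℂ) (j : ℕ) : ℂ :=
  (∏ i ∈ Finset.range j, (a - i)) / (j.factorial : ℂ)

theorem cbinom_eq_choose (a : ℂ) (j : ℕ) : cbinom a j = Ring.choose a j := by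
  rw [cbinom, Ring.choose_eq_smul, ← Polynomial.aeval_eq_smeval, Polynomial.aeval_def,
    ← Polynomial.eval_map, descPochhammer_map, descPochhammer_eval_eq_prod_range, smul_eq_mul,
    div_eq_inv_mul]

theorem mem_eball_one_of_norm_lt_one {z : ℂ} (hz : ‖z‖ < 1) : z ∈ Metric.eball (0 : ℂ) 1 := by
  rwa [Metric.mem_eball, edist_zero_right, ← ofReal_norm, ENNReal.ofReal_lt_one]

theorem hasSum_cbinom_mul_pow (a : ℂ) {z : ℂ} (hz : ‖z‖ < 1) :
    HasSum (fun j ↦ cbinom a j * z ^ j) ((1 + z) ^ a) := by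
  simpa [binomialSeries, FormalMultilinearSeries.ofScalars_apply_eq, cbinom_eq_choose, mul_comm]
    using Complex.one_add_cpow_hasFPowerSeriesOnBall_zero.hasSum (mem_eball_one_of_norm_lt_one hz)

theorem summable_norm_cbinom_mul_pow (a : ℂ) {z : ℂ} (hz : ‖z‖ < 1) :
    Summable (fun j ↦ ‖cbinom a j * z ^ j‖) := by
  simpa [binomialSeries, FormalMultilinearSeries.ofScalars_apply_eq, cbinom_eq_choose, mul_comm]
    using (binomialSeries ℂ a).summable_norm_apply
      (Metric.eball_subset_eball binomialSeries_radius_ge_one (mem_eball_one_of_norm_lt_one hz))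

theorem hasSum_ofReal_sub_cpow (a : ℂ) {N x : ℝ} (hN : 0 < N) (hx : |x| < N) :
    HasSum (fun j ↦ cbinom a j * (-(x : ℂ)) ^ j * (N : ℂ) ^ (a - j)) (((N - x : ℝ) : ℂ) ^ a) := by
  have hNC : (N : ℂ) ≠ 0 := ofReal_ne_zero.mpr hN.ne'
  have hz : ‖-(x : ℂ) / N‖ < 1 := by
    rwa [norm_div, norm_neg, norm_real, norm_real, Real.norm_eq_abs, Real.norm_of_nonneg hN.le,
      div_lt_one hN]
  have hfactor : (((N - x : ℝ) : ℂ)) ^ a = (1 + -(x : ℂ) / N) ^ a * (N : ℂ) ^ a := by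
    have h1 : 0 ≤ 1 - x / N := by
      rw [sub_nonneg, div_le_one hN]; exact (le_abs_self x).trans hx.le
    have h2 : 1 + -(x : ℂ) / N = ((1 - x / N : ℝ) : ℂ) := by push_cast; ring
    rw [h2, ← mul_cpow_ofReal_nonneg h1 hN.le, ← ofReal_mul, sub_mul, div_mul_cancel₀ _ hN.ne',
      one_mul]
  rw [hfactor]
  refine ((hasSum_cbinom_mul_pow a hz).mul_right _).congr_fun fun j ↦ ?_
  rw [cpow_sub _ _ hNC, cpow_natCast, div_pow]
  field_simp

theorem summable_mul_natSucc_cpow {c : ℕ → ℂ} (hc : Summable (fun j ↦ ‖c j‖)) {s : ℂ}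
    (hs : 1 < s.re) :
    Summable (fun p : ℕ × ℕ ↦ c p.2 * ((p.1 + 1 : ℕ) : ℂ) ^ (-(s + p.2))) := by
  have hzeta : Summable (fun n : ℕ ↦ ‖((n + 1 : ℕ) : ℂ) ^ (-s)‖) := by
    simp_rw [norm_natCast_cpow_of_pos (Nat.succ_pos _), neg_re]
    exact (summable_nat_add_iff 1).mpr (Real.summable_nat_rpow.mpr (neg_lt_neg hs))
  refine Summable.of_norm_bounded (hzeta.mul_of_nonneg hc (fun _ ↦ norm_nonneg _)
    (fun _ ↦ norm_nonneg _)) fun ⟨n, j⟩ ↦ ?_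
  rw [norm_mul, mul_comm]
  gcongr
  rw [norm_natCast_cpow_of_pos n.succ_pos, norm_natCast_cpow_of_pos n.succ_pos]
  apply Real.rpow_le_rpow_of_exponent_le (by simp)
  simp

theorem tsum_natSucc_sub_cpow_eq_tsum_cbinom {s : ℂ} (hs : 1 < s.re) {x : ℝ} (hx : |x| < 1) :
    ∑' n : ℕ, (((n + 1 : ℝ) - x : ℝ) : ℂ) ^ (-s) =
      ∑' j : ℕ, cbinom (-s) j * (-(x : ℂ)) ^ j *
        ∑' n : ℕ, ((n + 1 : ℕ) : ℂ) ^ (-(s + (j : ℂ))) := by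
  set c : ℕ → ℂ := fun j ↦ cbinom (-s) j * (-(x : ℂ)) ^ j
  have hrow (n : ℕ) : HasSum (fun j ↦ c j * ((n + 1 : ℕ) : ℂ) ^ (-(s + j)))
      ((((n + 1 : ℝ) - x : ℝ) : ℂ) ^ (-s)) := by
    refine (hasSum_ofReal_sub_cpow (-s) (N := n + 1) (by positivity)
      (hx.trans_le (by simp))).congr_fun fun j ↦ ?_
    simp only [c]
    push_cast
    ring_nf
  have hc : Summable (fun j ↦ ‖c j‖) := summable_norm_cbinom_mul_pow (-s) (by simpa using hx)
  calc ∑' n : ℕ, (((n + 1 : ℝ) - x : ℝ) : ℂ) ^ (-s)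
      = ∑' (n : ℕ) (j : ℕ), c j * ((n + 1 : ℕ) : ℂ) ^ (-(s + j)) :=
        tsum_congr fun n ↦ (hrow n).tsum_eq.symm
    _ = ∑' (j : ℕ) (n : ℕ), c j * ((n + 1 : ℕ) : ℂ) ^ (-(s + j)) :=
        (summable_mul_natSucc_cpow hc hs).tsum_comm.symm
    _ = _ := tsum_congr fun j ↦ tsum_mul_left

theorem riemannZeta_eq_tsum_natSucc_cpow_neg {s : ℂ} (hs : 1 < s.re) :
    riemannZeta s = ∑' n : ℕ, ((n + 1 : ℕ) : ℂ) ^ (-s) := by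
  rw [zeta_eq_tsum_one_div_nat_add_one_cpow hs]
  exact tsum_congr fun n ↦ by rw [cpow_neg, one_div, Nat.cast_succ]

theorem cbinom_neg_mul_neg_pow (s y : ℂ) (j : ℕ) :
    cbinom (-s) j * (-y) ^ j = (∏ i ∈ Finset.range j, (s + i)) / (j.factorial : ℂ) * y ^ j := by
  have hprod : ∏ i ∈ Finset.range j, (-s - i) = (-1) ^ j * ∏ i ∈ Finset.range j, (s + i) := by
    rw [← Finset.card_range j, ← Finset.prod_const, Finset.card_range, ← Finset.prod_mul_distrib]
    exact Finset.prod_congr rfl fun i _ ↦ by ring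
  rw [cbinom, hprod, neg_pow y]
  ring_nf
  rw [pow_mul', neg_one_sq, one_pow, mul_one]

theorem ramanujan_hurwitz_riemann (s : ℂ) (hs : 1 < s.re)
    (x : ℝ) (hx0 : 0 ≤ x) (hx1 : x < 1) :
    (∑' n : ℕ, (((n : ℝ) + (1 - x) : ℝ) : ℂ) ^ (-s) =
      ∑' j : ℕ, ((∏ i ∈ Finset.range j, (s + i)) / (j.factorial : ℂ)) *
        riemannZeta (s + j) * (x : ℂ) ^ j) ∧
    (∑' n : ℕ, (((n + 1 : ℝ) - x : ℝ) : ℂ) ^ (-s) =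
      ∑' j : ℕ, cbinom (-s) j * (-(x : ℂ)) ^ j *
        ∑' n : ℕ, ((n + 1 : ℕ) : ℂ) ^ (-(s + (j : ℂ)))) := by
  have hexpand := tsum_natSucc_sub_cpow_eq_tsum_cbinom hs (abs_lt.mpr ⟨by linarith, hx1⟩)
  refine ⟨?_, hexpand⟩
  have hshift (n : ℕ) : (n : ℝ) + (1 - x) = (n + 1 : ℝ) - x := by ring
  simp_rw [hshift, hexpand]
  refine tsum_congr fun j ↦ ?_
  have hsj : 1 < (s + j).re := by
    rw [add_re, natCast_re]; linarith [j.cast_nonneg (α := ℝ)]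
  rw [riemannZeta_eq_tsum_natSucc_cpow_neg hsj, cbinom_neg_mul_neg_pow]
  ring
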